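/- arXiv:2110.15106 — 2 statements merged into one kernel-verified Lean document; each statement's English description precedes it below -/
import Mathlib

section
/- Let p and q be coprime integers with p > 0, q > 0 and q even. Let n = p / q (integer division, i.e. n = ⌊p/q⌋) and r = p − n·q = p % q. Then: r is odd; 0 < r < q; q − 2·r is even; |q − 2·r| ≤ q − 2; and the integers p − 2·n·r and q − 2·r are coprime. -/
/-- Inductive step for unknotting a rational tangle `R(p/q)` with `q` even: with
`n = p / q` and `r = p % q`, the remainder `r` is odd and satisfies `0 < r < q`,
the new denominator `q - 2*r` is even with `|q - 2*r| ≤ q - 2`, and the new pair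
`(p - 2*n*r, q - 2*r)` is again coprime. -/
theorem crossing_change_step (p q : ℤ) (hcop : IsCoprime p q) (hp : 0 < p) (hq : 0 < q)
    (hqe : Even q) (n r : ℤ) (hn : n = p / q) (hr : r = p % q) :
    Odd r ∧ 0 < r ∧ r < q ∧ Even (q - 2 * r) ∧ |q - 2 * r| ≤ q - 2 ∧
      IsCoprime (p - 2 * n * r) (q - 2 * r) := by
  have hpq : r + q * n = p := by rw [hr, hn]; exact Int.emod_add_mul_ediv p q
  have hpodd : Odd p := by
    rcases Int.even_or_odd p with he | ho
    · exfalso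
      have h2 : IsUnit (2 : ℤ) := hcop.isUnit_of_dvd' he.two_dvd hqe.two_dvd
      rw [Int.isUnit_iff] at h2; omega
    · exact ho
  have hrodd : Odd r := by
    obtain ⟨a, ha⟩ := hqe
    obtain ⟨b, hb⟩ := hpodd
    refine ⟨b - a * n, ?_⟩
    rw [show r = p - q * n by omega, hb, ha]; ring
  have hr0 : 0 ≤ r := by rw [hr]; exact Int.emod_nonneg p hq.ne'
  have hrpos : 0 < r := by
    rcases hrodd with ⟨k, hk⟩; omega
  have hrq : r < q := by rw [hr]; exact Int.emod_lt_of_pos p hq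
  have hcr : IsCoprime r q := by
    have h := (hcop.add_mul_left_left (-n))
    have : p + q * (-n) = r := by rw [← hpq]; ring
    rwa [this] at h
  have hcr2 : IsCoprime r (q - 2 * r) := by
    have h := hcr.add_mul_right_right (-2)
    have : q + (-2) * r = q - 2 * r := by ring
    rwa [this] at h
  have hfin : IsCoprime (p - 2 * n * r) (q - 2 * r) := by
    have h := hcr2.add_mul_left_left n
    have : r + (q - 2 * r) * n = p - 2 * n * r := by rw [← hpq]; ring
    rwa [this] at h
  obtain ⟨a, ha⟩ := hqe
  refine ⟨hrodd, hrpos, hrq, ⟨a - 2 * r + r, by ring_nf; omega⟩, ?_, hfin⟩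
  rw [abs_le]
  constructor <;> omega
end

section
/- Let a and b be natural numbers with gcd(a, b) = 1 and b even. Then there exist a natural number k with k ≤ b / 2 and a sequence of pairs of natural numbers (a_0, b_0), (a_1, b_1), …, (a_k, b_k) such that (a_0, b_0) = (a, b), (a_k, b_k) = (1, 0), and for every index i < k there exist natural numbers n and r with a_i = n·b_i + r, 0 < r, r < b_i, a_{i+1} = |a_i − 2·n·r| and b_{i+1} = |b_i − 2·r| (the absolute values being taken of the corresponding integer differences). -/
/-- If `gcd a b = 1` and `b` is even, then the pair `(a, b)` can be transformed into
`(1, 0)` by at most `b / 2` steps, where each step takes `(a_i, b_i)` with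
`a_i = n * b_i + r`, `0 < r < b_i`, to `(|a_i - 2*n*r|, |b_i - 2*r|)`. -/
theorem unknotting_sequence (a b : ℕ) (hcop : Nat.gcd a b = 1) (hb : Even b) :
    ∃ k : ℕ, k ≤ b / 2 ∧ ∃ f : ℕ → ℕ × ℕ,
      f 0 = (a, b) ∧ f k = (1, 0) ∧
      ∀ i < k, ∃ n r : ℕ,
        (f i).1 = n * (f i).2 + r ∧ 0 < r ∧ r < (f i).2 ∧
        (f (i + 1)).1 = (((f i).1 : ℤ) - 2 * n * r).natAbs ∧
        (f (i + 1)).2 = (((f i).2 : ℤ) - 2 * r).natAbs := by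
  induction b using Nat.strong_induction_on generalizing a with
  | _ b ih =>
  rcases Nat.eq_zero_or_pos b with hb0 | hb0
  · subst hb0
    simp only [Nat.gcd_zero_right] at hcop
    subst hcop
    exact ⟨0, by omega, fun _ => (1, 0), rfl, rfl, by omega⟩
  · set n := a / b with hn
    set r := a % b with hr
    have hdm : n * b + r = a := by rw [hn, hr, mul_comm]; exact Nat.div_add_mod a b
    have hrb : r < b := Nat.mod_lt a hb0
    obtain ⟨c, hc⟩ := hb
    have haodd : ¬ 2 ∣ a := by
      intro ⟨d, hd⟩
      have : 2 ∣ Nat.gcd a b := Nat.dvd_gcd ⟨d, hd⟩ ⟨c, by omega⟩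
      omega
    have hr0 : 0 < r := by
      rcases Nat.even_or_odd r with ⟨d, hd⟩ | ⟨d, hd⟩
      · exact absurd (hdm ▸ dvd_add (Dvd.dvd.mul_left ⟨c, by omega⟩ n) ⟨d, by omega⟩) haodd
      · omega
    set a' := ((a : ℤ) - 2 * n * r).natAbs with ha'
    set b' := ((b : ℤ) - 2 * r).natAbs with hb'
    have hb'lt : b' < b := by omega
    have hb'le : (b' : ℤ) = (b : ℤ) - 2 * r ∨ (b' : ℤ) = 2 * r - b := by omega
    have hb'even : Even b' := by
      rcases hb'le with h | h <;> exact ⟨(b' / 2), by omega⟩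
    -- coprimality
    have hcopZ : IsCoprime (a : ℤ) (b : ℤ) := by
      rw [Int.isCoprime_iff_gcd_eq_one, Int.gcd_natCast_natCast]; exact hcop
    have h1 : IsCoprime (r : ℤ) (b : ℤ) := by
      have := hcopZ
      rw [show (a : ℤ) = (r : ℤ) + (b : ℤ) * n by push_cast [← hdm]; ring] at this
      exact this.of_add_mul_left_left
    have h2 : IsCoprime (r : ℤ) ((b : ℤ) - 2 * r) := by
      have := h1.add_mul_left_right (-2)
      rwa [show (b : ℤ) + (r : ℤ) * (-2) = (b : ℤ) - 2 * r by ring] at this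
    have h3 : IsCoprime ((a : ℤ) - 2 * n * r) ((b : ℤ) - 2 * r) := by
      have := (h2.add_mul_left_left n)
      rwa [show (r : ℤ) + ((b : ℤ) - 2 * r) * n = (a : ℤ) - 2 * n * r by
        push_cast [← hdm]; ring] at this
    have hcop' : Nat.gcd a' b' = 1 := by
      have := Int.isCoprime_iff_gcd_eq_one.mp h3
      rwa [Int.gcd] at this
    obtain ⟨k', hk', f', h0', hk'', hstep'⟩ := ih b' hb'lt a' hcop' hb'even
    refine ⟨k' + 1, by omega, fun i => match i with | 0 => (a, b) | (j+1) => f' j,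
      rfl, hk'', ?_⟩
    intro i hi
    match i with
    | 0 =>
      refine ⟨n, r, show a = n * b + r by omega, hr0, hrb, ?_, ?_⟩
      · show (f' 0).1 = ((a : ℤ) - 2 * n * r).natAbs
        rw [h0']
      · show (f' 0).2 = ((b : ℤ) - 2 * r).natAbs
        rw [h0']
    | (j+1) =>
      exact hstep' j (by omega)
end
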